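/- If a sign k-tensor A has nondeterministic NOF complexity at most c (i.e., its −1-entries are covered exactly by 2^c cylinder intersections), then μ^∞(A) ≤ 2·2^c + 1, i.e. N^k(A) ≥ log₂((μ^∞(A)−1)/2). -/

import Mathlib

open scoped BigOperators

variable {ι : Type*} [Fintype ι] [DecidableEq ι] {X : ι → Type*} [∀ i, Fintype (X i)]

/-- A cylinder in dimension `i`: membership does not depend on the `i`-th coordinate. -/
def IsCylinder (i : ι) (Z : Set (∀ j, X j)) : Prop :=
  ∀ z z' : ∀ j, X j, (∀ j, j ≠ i → z j = z' j) → z ∈ Z → z' ∈ Z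

/-- A cylinder intersection: an intersection of cylinders, one in each dimension. -/
def IsCylinderIntersection (Z : Set (∀ j, X j)) : Prop :=
  ∃ C : ι → Set (∀ j, X j), (∀ i, IsCylinder i (C i)) ∧ Z = ⋂ i, C i

/-- The dual cylinder intersection norm `μ*(Q) = max_Z |⟨Q, χ(Z)⟩|`. -/
noncomputable def mustar (Q : (∀ j, X j) → ℝ) : ℝ :=
  sSup {r : ℝ | ∃ Z : Set (∀ j, X j), IsCylinderIntersection Z ∧
    r = |∑ x, Q x * Z.indicator 1 x|}

/-- The cylinder intersection norm `μ(B) = min { Σ|α_i| : B = Σ α_i χ(Z_i) }`. -/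
noncomputable def mu (B : (∀ j, X j) → ℝ) : ℝ :=
  sInf {s : ℝ | ∃ (n : ℕ) (α : Fin n → ℝ) (Z : Fin n → Set (∀ j, X j)),
    (∀ t, IsCylinderIntersection (Z t)) ∧
    (∀ x, B x = ∑ t, α t * (Z t).indicator 1 x) ∧ s = ∑ t, |α t|}

/-- The approximate cylinder intersection norm `μ^∞(A) = min { μ(B) : 1 ≤ A∘B }`. -/
noncomputable def muInf (A : (∀ j, X j) → ℝ) : ℝ :=
  sInf {s : ℝ | ∃ B : (∀ j, X j) → ℝ, (∀ x, 1 ≤ A x * B x) ∧ s = mu B}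

/-!
If `Z_1, …, Z_m` cover the `−1`-entries of `A` exactly, then `B = J − 2 ∑ χ(Z_t)` equals `1` where
`A = 1` and is at most `−1` where `A = −1`, so `A ∘ B ≥ 1`; and this expression of `B` through
`m + 1` cylinder intersections (`J` being `χ` of the whole space) gives `μ(B) ≤ 1 + 2m`.
-/

section

variable {ι : Type*} {X : ι → Type*}

theorem isCylinderIntersection_univ : IsCylinderIntersection (Set.univ : Set (∀ j, X j)) :=
  ⟨fun _ => Set.univ, fun _ _ _ _ _ => trivial, Set.iInter_univ.symm⟩

theorem mu_le_of_eq_sum (B : (∀ j, X j) → ℝ) {n : ℕ} (α : Fin n → ℝ)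
    (Z : Fin n → Set (∀ j, X j)) (hZ : ∀ t, IsCylinderIntersection (Z t))
    (hB : ∀ x, B x = ∑ t, α t * (Z t).indicator 1 x) :
    mu B ≤ ∑ t, |α t| := by
  refine csInf_le ⟨0, ?_⟩ ⟨n, α, Z, hZ, hB, rfl⟩
  rintro _ ⟨_, _, _, _, _, rfl⟩
  positivity

theorem mu_nonneg (B : (∀ j, X j) → ℝ) : 0 ≤ mu B := by
  refine Real.sInf_nonneg ?_
  rintro _ ⟨_, _, _, _, _, rfl⟩
  positivity

theorem muInf_le_mu (A B : (∀ j, X j) → ℝ) (hAB : ∀ x, 1 ≤ A x * B x) : muInf A ≤ mu B := by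
  refine csInf_le ⟨0, ?_⟩ ⟨B, hAB, rfl⟩
  rintro _ ⟨B', _, rfl⟩
  exact mu_nonneg B'

theorem mu_one_sub_two_mul_sum_indicator_le {n : ℕ} (Z : Fin n → Set (∀ j, X j))
    (hZ : ∀ t, IsCylinderIntersection (Z t)) :
    mu (fun x => 1 - 2 * ∑ t, (Z t).indicator 1 x) ≤ 2 * n + 1 := by
  have hrepr : ∀ x, 1 - 2 * ∑ t, (Z t).indicator 1 x =
      ∑ t, (Fin.cons 1 fun _ => -2 : Fin (n + 1) → ℝ) t *
        ((Fin.cons Set.univ Z : Fin (n + 1) → Set (∀ j, X j)) t).indicator 1 x := by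
    intro x
    simp only [Fin.sum_univ_succ, Fin.cons_zero, Fin.cons_succ, Set.indicator_univ,
      Pi.one_apply, ← Finset.mul_sum]
    ring
  have hcyl : ∀ t, IsCylinderIntersection
      ((Fin.cons Set.univ Z : Fin (n + 1) → Set (∀ j, X j)) t) :=
    Fin.cases isCylinderIntersection_univ hZ
  calc _ ≤ _ := mu_le_of_eq_sum _ _ _ hcyl hrepr
    _ = 2 * n + 1 := by
      simp only [Fin.sum_univ_succ, Fin.cons_zero, Fin.cons_succ, abs_one, abs_neg,
        Nat.abs_ofNat, Finset.sum_const, Finset.card_univ, Fintype.card_fin, nsmul_eq_mul]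
      ring

end

theorem one_le_mul_one_sub_two_mul_sum_indicator {α τ : Type*} [Fintype τ] (A : α → ℝ)
    (Z : τ → Set α) (x : α) (hA : A x = 1 ∨ A x = -1) (hZ : A x = -1 ↔ ∃ t, x ∈ Z t) :
    1 ≤ A x * (1 - 2 * ∑ t, (Z t).indicator 1 x) := by
  rcases hA with hpos | hneg
  · have hx : ∀ t, x ∉ Z t := fun t ht => by norm_num [hZ.2 ⟨t, ht⟩] at hpos
    simp [hpos, Set.indicator_of_notMem (hx _)]
  · obtain ⟨t, ht⟩ := hZ.1 hneg
    have hsum : 1 ≤ ∑ t, (Z t).indicator (1 : α → ℝ) x := by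
      calc (1 : ℝ) = (Z t).indicator 1 x := by simp [ht]
        _ ≤ _ := Finset.single_le_sum (fun t _ => Set.indicator_nonneg (by simp) x)
          (Finset.mem_univ t)
    rw [hneg]
    linarith

theorem stmt7_general {k : ℕ} {X : Fin k → Type*}
    (A : (∀ j, X j) → ℝ) (hA : ∀ x, A x = 1 ∨ A x = -1) (c : ℕ)
    (hN : ∃ Z : Fin (2 ^ c) → Set (∀ j, X j),
      (∀ t, IsCylinderIntersection (Z t)) ∧
      (∀ x, A x = -1 ↔ ∃ t, x ∈ Z t)) :
    muInf A ≤ 2 * 2 ^ c + 1 := by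
  obtain ⟨Z, hZ, hcover⟩ := hN
  calc muInf A ≤ mu (fun x => 1 - 2 * ∑ t, (Z t).indicator 1 x) :=
        muInf_le_mu _ _ fun x => one_le_mul_one_sub_two_mul_sum_indicator A Z x (hA x) (hcover x)
    _ ≤ 2 * 2 ^ c + 1 := by
      exact_mod_cast mu_one_sub_two_mul_sum_indicator_le Z hZ

/-- If a sign `k`-tensor `A` has nondeterministic NOF complexity at most `c`, i.e., its
`−1`-entries are exactly covered by `2^c` cylinder intersections, then
`μ^∞(A) ≤ 2·2^c + 1`, i.e. `N^k(A) ≥ log₂((μ^∞(A)−1)/2)`. -/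
theorem stmt7 {k : ℕ} {X : Fin k → Type*} [∀ i, Fintype (X i)]
    (A : (∀ j, X j) → ℝ) (hA : ∀ x, A x = 1 ∨ A x = -1) (c : ℕ)
    (hN : ∃ Z : Fin (2 ^ c) → Set (∀ j, X j),
      (∀ t, IsCylinderIntersection (Z t)) ∧
      (∀ x, A x = -1 ↔ ∃ t, x ∈ Z t)) :
    muInf A ≤ 2 * 2 ^ c + 1 :=
  stmt7_general A hA c hN
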